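/- For positive integers a and b with d = gcd(a,b), the sum (1/lcm(a,b)) · ∑_{i=1}^{a/d} ∑_{j=1}^{b/d} ∑_{k=1}^{d} ((a − ((i−1)d + k))/a − (a−1)/(2a)) · ((b − ((j−1)d + k))/b − (b−1)/(2b)) equals (d² − 1)/(12·d·lcm(a,b)). -/

import Mathlib

private lemma key (N : ℕ) (p q r : ℚ) :
    ∑ k ∈ Finset.Icc 1 N, (p + q * (k:ℚ) + r * (k:ℚ)^2)
      = p * N + q * (N*(N+1)/2) + r * (N*(N+1)*(2*N+1)/6) := by
  induction N with
  | zero => simp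
  | succ n ih =>
    rw [Finset.sum_Icc_succ_top (by omega), ih]
    push_cast
    ring

theorem stmt_6 (a b : ℕ) (ha : 0 < a) (hb : 0 < b) :
    (1 / (Nat.lcm a b : ℚ)) *
        ∑ i ∈ Finset.Icc 1 (a / Nat.gcd a b), ∑ j ∈ Finset.Icc 1 (b / Nat.gcd a b),
          ∑ k ∈ Finset.Icc 1 (Nat.gcd a b),
            ((((a : ℚ) - (((i : ℚ) - 1) * (Nat.gcd a b : ℚ) + (k : ℚ))) / (a : ℚ) -
                ((a : ℚ) - 1) / (2 * (a : ℚ))) *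
              (((b : ℚ) - (((j : ℚ) - 1) * (Nat.gcd a b : ℚ) + (k : ℚ))) / (b : ℚ) -
                ((b : ℚ) - 1) / (2 * (b : ℚ)))) =
      ((Nat.gcd a b : ℚ) ^ 2 - 1) / (12 * (Nat.gcd a b : ℚ) * (Nat.lcm a b : ℚ)) := by
  obtain ⟨m, hm⟩ := Nat.gcd_dvd_left a b
  obtain ⟨n, hn⟩ := Nat.gcd_dvd_right a b
  set c := Nat.gcd a b with hc
  have hc0 : 0 < c := Nat.gcd_pos_of_pos_left b ha
  have hm0 : 0 < m := Nat.pos_of_ne_zero (fun h => by rw [h, Nat.mul_zero] at hm; omega)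
  have hn0 : 0 < n := Nat.pos_of_ne_zero (fun h => by rw [h, Nat.mul_zero] at hn; omega)
  have hadc : a / c = m := by rw [hm, Nat.mul_div_cancel_left _ hc0]
  have hbdc : b / c = n := by rw [hn, Nat.mul_div_cancel_left _ hc0]
  have haQ : (a:ℚ) = (c:ℚ) * m := by exact_mod_cast congrArg (Nat.cast (R := ℚ)) hm
  have hbQ : (b:ℚ) = (c:ℚ) * n := by exact_mod_cast congrArg (Nat.cast (R := ℚ)) hn
  have hlcm : Nat.lcm a b = c * m * n := by
    have h1 : c * Nat.lcm a b = c * (c * m * n) := by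
      rw [Nat.gcd_mul_lcm a b]
      rw [hm, hn]; ring
    exact Nat.eq_of_mul_eq_mul_left hc0 h1
  have hlcmQ : (Nat.lcm a b : ℚ) = (c:ℚ) * m * n := by exact_mod_cast congrArg (Nat.cast (R := ℚ)) hlcm
  have ha0 : (a:ℚ) ≠ 0 := by positivity
  have hb0 : (b:ℚ) ≠ 0 := by positivity
  have hcQ0 : (c:ℚ) ≠ 0 := by positivity
  have hmQ0 : (m:ℚ) ≠ 0 := by positivity
  have hnQ0 : (n:ℚ) ≠ 0 := by positivity
  rw [hadc, hbdc]
  have hF : ∀ k : ℕ,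
      (∑ i ∈ Finset.Icc 1 m, (((a:ℚ) - (((i:ℚ)-1)*(c:ℚ) + (k:ℚ)))/(a:ℚ) - ((a:ℚ)-1)/(2*(a:ℚ))))
        = (m:ℚ)*((c:ℚ)+1-2*(k:ℚ))/(2*(a:ℚ)) := by
    intro k
    calc ∑ i ∈ Finset.Icc 1 m, (((a:ℚ) - (((i:ℚ)-1)*(c:ℚ) + (k:ℚ)))/(a:ℚ) - ((a:ℚ)-1)/(2*(a:ℚ)))
        = ∑ i ∈ Finset.Icc 1 m,
            ((((a:ℚ)+2*(c:ℚ)+1)/(2*(a:ℚ)) - (k:ℚ)/(a:ℚ)) + (-(c:ℚ)/(a:ℚ)) * (i:ℚ) + 0 * (i:ℚ)^2) :=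
          Finset.sum_congr rfl (fun i _ => by field_simp; ring)
      _ = _ := by
          rw [key, haQ]
          field_simp
          ring
  have hG : ∀ k : ℕ,
      (∑ j ∈ Finset.Icc 1 n, (((b:ℚ) - (((j:ℚ)-1)*(c:ℚ) + (k:ℚ)))/(b:ℚ) - ((b:ℚ)-1)/(2*(b:ℚ))))
        = (n:ℚ)*((c:ℚ)+1-2*(k:ℚ))/(2*(b:ℚ)) := by
    intro k
    calc ∑ j ∈ Finset.Icc 1 n, (((b:ℚ) - (((j:ℚ)-1)*(c:ℚ) + (k:ℚ)))/(b:ℚ) - ((b:ℚ)-1)/(2*(b:ℚ)))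
        = ∑ j ∈ Finset.Icc 1 n,
            ((((b:ℚ)+2*(c:ℚ)+1)/(2*(b:ℚ)) - (k:ℚ)/(b:ℚ)) + (-(c:ℚ)/(b:ℚ)) * (j:ℚ) + 0 * (j:ℚ)^2) :=
          Finset.sum_congr rfl (fun j _ => by field_simp; ring)
      _ = _ := by
          rw [key, hbQ]
          field_simp
          ring
  have step1 : ∀ i : ℕ,
      (∑ j ∈ Finset.Icc 1 n, ∑ k ∈ Finset.Icc 1 c,
        ((((a:ℚ) - (((i:ℚ)-1)*(c:ℚ) + (k:ℚ)))/(a:ℚ) - ((a:ℚ)-1)/(2*(a:ℚ))) *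
         (((b:ℚ) - (((j:ℚ)-1)*(c:ℚ) + (k:ℚ)))/(b:ℚ) - ((b:ℚ)-1)/(2*(b:ℚ)))))
      = ∑ k ∈ Finset.Icc 1 c,
          ((((a:ℚ) - (((i:ℚ)-1)*(c:ℚ) + (k:ℚ)))/(a:ℚ) - ((a:ℚ)-1)/(2*(a:ℚ))) *
           ((n:ℚ)*((c:ℚ)+1-2*(k:ℚ))/(2*(b:ℚ)))) := by
    intro i
    rw [Finset.sum_comm]
    refine Finset.sum_congr rfl fun k _ => ?_
    rw [← Finset.mul_sum, hG k]
  calc (1 / (Nat.lcm a b : ℚ)) *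
        ∑ i ∈ Finset.Icc 1 m, ∑ j ∈ Finset.Icc 1 n, ∑ k ∈ Finset.Icc 1 c,
          ((((a:ℚ) - (((i:ℚ)-1)*(c:ℚ) + (k:ℚ)))/(a:ℚ) - ((a:ℚ)-1)/(2*(a:ℚ))) *
           (((b:ℚ) - (((j:ℚ)-1)*(c:ℚ) + (k:ℚ)))/(b:ℚ) - ((b:ℚ)-1)/(2*(b:ℚ))))
      = (1 / (Nat.lcm a b : ℚ)) *
        ∑ k ∈ Finset.Icc 1 c,
          (((m:ℚ)*((c:ℚ)+1-2*(k:ℚ))/(2*(a:ℚ))) * ((n:ℚ)*((c:ℚ)+1-2*(k:ℚ))/(2*(b:ℚ)))) := by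
        congr 1
        rw [Finset.sum_congr rfl fun i _ => step1 i, Finset.sum_comm]
        refine Finset.sum_congr rfl fun k _ => ?_
        rw [← Finset.sum_mul, hF k]
    _ = ((c:ℚ) ^ 2 - 1) / (12 * (c:ℚ) * (Nat.lcm a b : ℚ)) := by
        have expand : ∀ k ∈ Finset.Icc 1 c,
            (((m:ℚ)*((c:ℚ)+1-2*(k:ℚ))/(2*(a:ℚ))) * ((n:ℚ)*((c:ℚ)+1-2*(k:ℚ))/(2*(b:ℚ))))
            = ((m:ℚ)*(n:ℚ)*((c:ℚ)+1)^2/(4*(a:ℚ)*(b:ℚ))) +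
              (-(m:ℚ)*(n:ℚ)*((c:ℚ)+1)/((a:ℚ)*(b:ℚ))) * (k:ℚ) +
              ((m:ℚ)*(n:ℚ)/((a:ℚ)*(b:ℚ))) * (k:ℚ)^2 := by
          intro k _
          field_simp
          ring
        rw [Finset.sum_congr rfl expand, key, hlcmQ, haQ, hbQ]
        field_simp
        ring
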